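/- Let G be a graph whose vertex set is partitioned into V_s and V_m. Let G_sm be the graph obtained from G by contracting V_m to a single vertex, and let G_ms be the graph obtained by deleting the interior of V_s but keeping the boundary vertices V_cs (endpoints in V_s of edges crossing the partition) together with all edges of G within V_m, the crossing edges, and an added connected edge set on V_cs. Then G is connected if and only if both G_sm and G_ms are connected, provided the added edge set on V_cs induces a connected subgraph and the subgraph of G induced by V_s is connected. -/
import Mathlib


/-- Boundary nodes of `Vs`: endpoints in `Vs` of edges crossing the partition
`(Vs, Vsᶜ)`. -/
def boundary {V : Type} (G : SimpleGraph V) (Vs : Set V) : Set V :=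
  {i | i ∈ Vs ∧ ∃ j, j ∉ Vs ∧ G.Adj i j}

/-- The graph `G_sm` obtained from `G` by contracting `Vm = Vsᶜ` to a single
vertex `v_m`: vertices `Vs ⊕ {v_m}`, edges of the induced subgraph on `Vs`
plus the crossing edges with their `Vm`-endpoints replaced by `v_m`. -/
def contractOutside {V : Type} (G : SimpleGraph V) (Vs : Set V) :
    SimpleGraph (↥Vs ⊕ Unit) :=
  SimpleGraph.fromRel (fun a b =>
    (∃ x y : ↥Vs, a = Sum.inl x ∧ b = Sum.inl y ∧ G.Adj ↑x ↑y) ∨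
    (∃ x : ↥Vs, a = Sum.inl x ∧ b = Sum.inr () ∧ ∃ j, j ∉ Vs ∧ G.Adj ↑x j))

/-- The graph `G_ms`: vertices `Vm ∪ V_cs`, with the edges of `G` inside `Vm`,
the crossing edges, and an added edge set `Ecs` on the boundary nodes `V_cs`. -/
def deleteInterior {V : Type} (G : SimpleGraph V) (Vs : Set V)
    (Ecs : V → V → Prop) : SimpleGraph ↥(Vsᶜ ∪ boundary G Vs) :=
  SimpleGraph.fromRel (fun a b =>
    ((↑a : V) ∉ Vs ∧ (↑b : V) ∉ Vs ∧ G.Adj ↑a ↑b) ∨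
    ((↑a : V) ∈ Vs ∧ (↑b : V) ∉ Vs ∧ G.Adj ↑a ↑b) ∨
    Ecs ↑a ↑b)

/-- If the subgraph of `G` induced by `Vs` is connected and the added edge set
`Ecs` on the boundary nodes `V_cs` induces a connected graph on `V_cs`, then
`G` is connected iff both the contraction `G_sm` and the graph `G_ms` are
connected. -/
theorem stmt9 {V : Type} [Fintype V] (G : SimpleGraph V)
    (Vs : Set V) (Ecs : V → V → Prop)
    (hVs : Vs.Nonempty) (hVm : Vsᶜ.Nonempty)
    (hGs : (SimpleGraph.induce Vs G).Connected)
    (hEcsSub : ∀ a b, Ecs a b → a ∈ boundary G Vs ∧ b ∈ boundary G Vs)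
    (hEcsConn :
      (SimpleGraph.fromRel (fun x y : ↥(boundary G Vs) => Ecs ↑x ↑y)).Connected) :
    G.Connected ↔
      (contractOutside G Vs).Connected ∧ (deleteInterior G Vs Ecs).Connected := by
  -- boundary is nonempty
  obtain ⟨b0, hb0⟩ := (Set.nonempty_coe_sort).mp hEcsConn.nonempty
  have hb0' : b0 ∈ Vs ∧ ∃ j, j ∉ Vs ∧ G.Adj b0 j := hb0
  -- reachability within Vs in G
  have hVsReach : ∀ a b : V, a ∈ Vs → b ∈ Vs → G.Reachable a b := by
    intro a b ha hb
    exact (hGs.preconnected ⟨a, ha⟩ ⟨b, hb⟩).map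
      (SimpleGraph.Embedding.induce Vs).toHom
  -- adjacency helpers for deleteInterior
  have adjmm : ∀ (a b : ↥(Vsᶜ ∪ boundary G Vs)), (↑a : V) ∉ Vs → (↑b : V) ∉ Vs →
      G.Adj ↑a ↑b → (deleteInterior G Vs Ecs).Adj a b := by
    intro a b ha hb hab
    rw [deleteInterior, SimpleGraph.fromRel_adj]
    exact ⟨fun e => hab.ne (Subtype.ext_iff.mp e), Or.inl (Or.inl ⟨ha, hb, hab⟩)⟩
  have adjsm : ∀ (a b : ↥(Vsᶜ ∪ boundary G Vs)), (↑a : V) ∈ Vs → (↑b : V) ∉ Vs →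
      G.Adj ↑a ↑b → (deleteInterior G Vs Ecs).Adj a b := by
    intro a b ha hb hab
    rw [deleteInterior, SimpleGraph.fromRel_adj]
    exact ⟨fun e => hab.ne (Subtype.ext_iff.mp e), Or.inl (Or.inr (Or.inl ⟨ha, hb, hab⟩))⟩
  -- embedding of the Ecs-graph into deleteInterior
  have lemB : ∀ a b : ↥(boundary G Vs),
      (deleteInterior G Vs Ecs).Reachable ⟨↑a, Or.inr a.2⟩ ⟨↑b, Or.inr b.2⟩ := by
    intro a b
    have hf : ∀ x y : ↥(boundary G Vs),
        (SimpleGraph.fromRel (fun x y : ↥(boundary G Vs) => Ecs ↑x ↑y)).Adj x y →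
        (deleteInterior G Vs Ecs).Adj ⟨↑x, Or.inr x.2⟩ ⟨↑y, Or.inr y.2⟩ := by
      intro x y hxy
      rw [SimpleGraph.fromRel_adj] at hxy
      obtain ⟨hne, hr⟩ := hxy
      rw [deleteInterior, SimpleGraph.fromRel_adj]
      refine ⟨fun e => hne (Subtype.ext (Subtype.mk_eq_mk.mp e)), ?_⟩
      rcases hr with h | h
      · exact Or.inl (Or.inr (Or.inr h))
      · exact Or.inr (Or.inr (Or.inr h))
    exact (hEcsConn.preconnected a b).map
      (⟨fun x => ⟨↑x, Or.inr x.2⟩, fun {p q} h => hf p q h⟩ :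
        (SimpleGraph.fromRel fun x y : ↥(boundary G Vs) => Ecs ↑x ↑y) →g
          deleteInterior G Vs Ecs)
  -- key walk lemma
  have W : ∀ (u v : V) (w : G.Walk u v) (hv : v ∉ Vs),
      (∀ _ : u ∈ Vs, ∃ b, ∃ hb : b ∈ boundary G Vs,
        (deleteInterior G Vs Ecs).Reachable ⟨b, Or.inr hb⟩ ⟨v, Or.inl hv⟩) ∧
      (∀ hu : u ∉ Vs,
        (deleteInterior G Vs Ecs).Reachable ⟨u, Or.inl hu⟩ ⟨v, Or.inl hv⟩) := by
    intro u v w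
    induction w with
    | nil =>
      intro hv
      exact ⟨fun hu => absurd hu hv, fun hu => SimpleGraph.Reachable.refl _⟩
    | @cons a x b h p ih =>
      intro hv
      obtain ⟨ih1, ih2⟩ := ih hv
      constructor
      · intro hu
        by_cases hx : x ∈ Vs
        · exact ih1 hx
        · have haB : a ∈ boundary G Vs := ⟨hu, x, hx, h⟩
          refine ⟨a, haB, ?_⟩
          exact (adjsm ⟨a, Or.inr haB⟩ ⟨x, Or.inl hx⟩ hu hx h).reachable.trans (ih2 hx)
      · intro hu
        by_cases hx : x ∈ Vs
        · have hxB : x ∈ boundary G Vs := ⟨hx, a, hu, h.symm⟩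
          obtain ⟨b', hb', hr⟩ := ih1 hx
          have e1 : (deleteInterior G Vs Ecs).Adj ⟨a, Or.inl hu⟩ ⟨x, Or.inr hxB⟩ :=
            (adjsm ⟨x, Or.inr hxB⟩ ⟨a, Or.inl hu⟩ hx hu h.symm).symm
          exact e1.reachable.trans ((lemB ⟨x, hxB⟩ ⟨b', hb'⟩).trans hr)
        · exact (adjmm ⟨a, Or.inl hu⟩ ⟨x, Or.inl hx⟩ hu hx h).reachable.trans (ih2 hx)
  constructor
  · intro hG
    constructor
    · -- contractOutside connected
      rw [SimpleGraph.connected_iff]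
      refine ⟨?_, ⟨Sum.inr ()⟩⟩
      have homReach : ∀ x y : ↥Vs,
          (contractOutside G Vs).Reachable (Sum.inl x) (Sum.inl y) := by
        intro x y
        refine (hGs.preconnected x y).map ⟨Sum.inl, ?_⟩
        intro p q hpq
        have hadj : G.Adj ↑p ↑q := hpq
        rw [contractOutside, SimpleGraph.fromRel_adj]
        exact ⟨fun e => hadj.ne (Subtype.ext_iff.mp (Sum.inl.inj e)),
          Or.inl (Or.inl ⟨p, q, rfl, rfl, hadj⟩)⟩
      have edgeR : (contractOutside G Vs).Adj (Sum.inl ⟨b0, hb0'.1⟩) (Sum.inr ()) := by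
        rw [contractOutside, SimpleGraph.fromRel_adj]
        exact ⟨fun e => by simp at e, Or.inl (Or.inr ⟨⟨b0, hb0'.1⟩, rfl, rfl, hb0'.2⟩)⟩
      intro p q
      match p, q with
      | Sum.inl x, Sum.inl y => exact homReach x y
      | Sum.inl x, Sum.inr () =>
        exact (homReach x ⟨b0, hb0'.1⟩).trans edgeR.reachable
      | Sum.inr (), Sum.inl y =>
        exact (edgeR.reachable.symm).trans (homReach ⟨b0, hb0'.1⟩ y)
      | Sum.inr (), Sum.inr () => exact SimpleGraph.Reachable.refl _
    · -- deleteInterior connected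
      obtain ⟨m0, hm0⟩ := hVm
      rw [SimpleGraph.connected_iff]
      refine ⟨?_, ⟨⟨m0, Or.inl hm0⟩⟩⟩
      obtain ⟨j0, hj0, hadj0⟩ := hb0'.2
      have toB : ∀ p : ↥(Vsᶜ ∪ boundary G Vs),
          (deleteInterior G Vs Ecs).Reachable p ⟨b0, Or.inr hb0⟩ := by
        intro p
        rcases p.2 with hp | hp
        · have hp' : (↑p : V) ∉ Vs := hp
          have hwalk : G.Reachable ↑p j0 := hG.preconnected ↑p j0
          obtain ⟨w⟩ := hwalk
          have hr := (W ↑p j0 w hj0).2 hp'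
          have e1 : (deleteInterior G Vs Ecs).Adj ⟨j0, Or.inl hj0⟩ ⟨b0, Or.inr hb0⟩ :=
            (adjsm ⟨b0, Or.inr hb0⟩ ⟨j0, Or.inl hj0⟩ hb0'.1 hj0 hadj0).symm
          have hpe : p = ⟨↑p, Or.inl hp'⟩ := Subtype.ext rfl
          rw [hpe]
          exact hr.trans e1.reachable
        · have hpe : p = ⟨↑p, Or.inr hp⟩ := Subtype.ext rfl
          rw [hpe]
          exact lemB ⟨↑p, hp⟩ ⟨b0, hb0⟩
      intro p q
      exact (toB p).trans (toB q).symm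
  · rintro ⟨-, hDm⟩
    -- walks in deleteInterior give reachability in G
    have X : ∀ (p q : ↥(Vsᶜ ∪ boundary G Vs)),
        (deleteInterior G Vs Ecs).Walk p q → G.Reachable ↑p ↑q := by
      intro p q w
      induction w with
      | nil => exact SimpleGraph.Reachable.refl _
      | @cons a x b h p ih =>
        refine SimpleGraph.Reachable.trans ?_ ih
        rw [deleteInterior, SimpleGraph.fromRel_adj] at h
        obtain ⟨-, hr⟩ := h
        rcases hr with (⟨-, -, hadj⟩ | ⟨-, -, hadj⟩ | hecs) | (⟨-, -, hadj⟩ | ⟨-, -, hadj⟩ | hecs)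
        · exact hadj.reachable
        · exact hadj.reachable
        · exact hVsReach _ _ (hEcsSub _ _ hecs).1.1 (hEcsSub _ _ hecs).2.1
        · exact hadj.symm.reachable
        · exact hadj.symm.reachable
        · exact hVsReach _ _ (hEcsSub _ _ hecs).2.1 (hEcsSub _ _ hecs).1.1
    have key : ∀ u : V, G.Reachable u b0 := by
      intro u
      by_cases hu : u ∈ Vs
      · exact hVsReach u b0 hu hb0'.1
      · obtain ⟨w⟩ := hDm.preconnected ⟨u, Or.inl hu⟩ ⟨b0, Or.inr hb0⟩
        exact X _ _ w
    rw [SimpleGraph.connected_iff]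
    exact ⟨fun u v => (key u).trans (key v).symm, ⟨hVs.choose⟩⟩
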